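/- For all positive integers a, b and all v ∈ V(a) ⊗ V(b), v' ∈ V(a+b), one has (Φ_{a,b}(v), v')_{(a+b)} = (v, q^{-ab}·Φ^{a,b}(v'))_{(a,b)}. -/

import Mathlib

open scoped Classical

set_option maxHeartbeats 1000000
set_option synthInstance.maxHeartbeats 200000

noncomputable section

abbrev K : Type := RatFunc ℂ

noncomputable def q : K := RatFunc.X

/-- The quantum integer `[k] = (q^k - q^{-k})/(q - q^{-1})`. -/
noncomputable def qnum (k : ℕ) : K := (q ^ k - q⁻¹ ^ k) / (q - q⁻¹)

/-- The quantum factorial `[k]! = [k][k-1]⋯[1]`. -/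
noncomputable def qfact : ℕ → K
  | 0 => 1
  | k + 1 => qnum (k + 1) * qfact k

/-- The underlying vector space of `V(a_1) ⊗ ⋯ ⊗ V(a_l)`, with standard basis indexed by
sequences `η ∈ {0,1}^l`. -/
abbrev V (n : ℕ) : Type := (Fin n → Fin 2) → K

/-- The standard basis vector `v^a_η`. -/
noncomputable def eb {n : ℕ} (η : Fin n → Fin 2) : V n := fun γ => if γ = η then 1 else 0

/-- The number of `1`s in `γ` strictly before position `i` (the Koszul sign exponent). -/
def onesBefore {n : ℕ} (γ : Fin n → Fin 2) (i : Fin n) : ℕ :=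
  (Finset.univ.filter (fun k => k < i ∧ γ k = 1)).card

/-- The action of `E` on `V(a_1) ⊗ ⋯ ⊗ V(a_l)` (via the iterated comultiplication
`Δ(E) = E ⊗ K⁻¹ + 1 ⊗ E`, with the Koszul sign rule). -/
noncomputable def Eop (a : ℕ → ℕ) (n : ℕ) : Module.End K (V n) where
  toFun f := fun γ => ∑ i : Fin n,
    if γ i = 0 then
      ((-1 : K) ^ onesBefore γ i) * qnum (a i)
        * q ^ (-((∑ j ∈ Finset.univ.filter (fun j => i < j), a j : ℕ) : ℤ))
        * f (Function.update γ i 1)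
    else 0
  map_add' f g := by
    funext γ
    simp only [Pi.add_apply, ← Finset.sum_add_distrib]
    refine Finset.sum_congr rfl fun i _ => ?_
    split_ifs <;> ring
  map_smul' c f := by
    funext γ
    simp only [Pi.smul_apply, smul_eq_mul, RingHom.id_apply, Finset.mul_sum]
    refine Finset.sum_congr rfl fun i _ => ?_
    split_ifs <;> ring

/-- The action of `F` on `V(a_1) ⊗ ⋯ ⊗ V(a_l)` (via the iterated comultiplication
`Δ(F) = F ⊗ 1 + K ⊗ F`, with the Koszul sign rule). -/
noncomputable def Fop (a : ℕ → ℕ) (n : ℕ) : Module.End K (V n) where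
  toFun f := fun γ => ∑ i : Fin n,
    if γ i = 1 then
      ((-1 : K) ^ onesBefore γ i)
        * q ^ (∑ j ∈ Finset.univ.filter (fun j => j < i), a j)
        * f (Function.update γ i 0)
    else 0
  map_add' f g := by
    funext γ
    simp only [Pi.add_apply, ← Finset.sum_add_distrib]
    refine Finset.sum_congr rfl fun i _ => ?_
    split_ifs <;> ring
  map_smul' c f := by
    funext γ
    simp only [Pi.smul_apply, smul_eq_mul, RingHom.id_apply, Finset.mul_sum]
    refine Finset.sum_congr rfl fun i _ => ?_
    split_ifs <;> ring

/-- The number of entries of `η` equal to `1` (the super degree of `v_η`). -/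
def ones {m : ℕ} (η : Fin m → Fin 2) : ℕ := (Finset.univ.filter (fun i => η i = 1)).card

/-- The number of entries of `η` equal to `0`. -/
def zeros {m : ℕ} (η : Fin m → Fin 2) : ℕ := (Finset.univ.filter (fun i => η i = 0)).card

/-- The parity twist `x ↦ (-1)^{|x|}·x` (on homogeneous components). -/
noncomputable def twist {m : ℕ} (x : V m) : V m := fun η => (-1 : K) ^ ones η * x η

/-- The bar involution of `V(a_1) ⊗ ⋯ ⊗ V(a_m)`, defined inductively from
`bar v^a_i = v^a_i` on each factor by `bar (w ⊗ w') = Θ'(bar w ⊗ bar w')` with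
`Θ' = 1 + (q⁻¹ - q) E ⊗ F` (with the Koszul sign rule) and `bar q = q⁻¹`. -/
noncomputable def barV (a : ℕ → ℕ) : (m : ℕ) → V m → V m
  | 0, f => f
  | m + 1, f => fun γ =>
    if γ (Fin.last m) = 0 then
      barV a m (fun δ => f (Fin.snoc δ 0)) (fun i => γ i.castSucc)
    else
      barV a m (fun δ => f (Fin.snoc δ 1)) (fun i => γ i.castSucc)
        + (q⁻¹ - q) *
          Eop a m (twist (barV a m (fun δ => f (Fin.snoc δ 0)))) (fun i => γ i.castSucc)

def s (n : ℕ) (i : Fin (n - 1)) : Equiv.Perm (Fin n) :=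
  Equiv.swap ⟨(i : ℕ), by have := i.isLt; omega⟩ ⟨(i : ℕ) + 1, by have := i.isLt; omega⟩

def wordProd (n : ℕ) (l : List (Fin (n - 1))) : Equiv.Perm (Fin n) :=
  (l.map (s n)).prod

def len (n : ℕ) (w : Equiv.Perm (Fin n)) : ℕ :=
  sInf {k | ∃ l : List (Fin (n - 1)), l.length = k ∧ wordProd n l = w}

def bruhatLE (n : ℕ) (u w : Equiv.Perm (Fin n)) : Prop :=
  ∃ l : List (Fin (n - 1)), l.length = len n w ∧ wordProd n l = w ∧
    ∃ t : List (Fin (n - 1)), t.Sublist l ∧ wordProd n t = u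

def bruhatLT (n : ℕ) (u w : Equiv.Perm (Fin n)) : Prop :=
  bruhatLE n u w ∧ u ≠ w

/-- The parabolic subgroup of `S_n` generated by the simple transpositions indexed by `P`. -/
def parab (n : ℕ) (P : Finset (Fin (n - 1))) : Subgroup (Equiv.Perm (Fin n)) :=
  Subgroup.closure {σ | ∃ i ∈ P, σ = s n i}

/-- `w` is a shortest coset representative for `(S_k × S_{l-k}) \ S_l` (the parabolic
subgroup generated by all simple reflections except `s_k`). -/
def shortRep (l k : ℕ) (w : Equiv.Perm (Fin l)) : Prop :=
  ∀ x ∈ parab l (Finset.univ.filter (fun i : Fin (l - 1) => (i : ℕ) + 1 ≠ k)),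
    len l w ≤ len l (x * w)

/-- The minimal `{0,1}`-sequence `η_min = (0,…,0,1,…,1)` with `k` zeros. -/
def etaMin (l k : ℕ) : Fin l → Fin 2 := fun i => if (i : ℕ) < k then 0 else 1

/-- The partial order on the standard basis vectors of a weight space: within the weight
with `k` zeros, `η < γ` iff `η = η_min·u`, `γ = η_min·w` for shortest coset
representatives `u ≺ w` in the Bruhat order. -/
def seqLT (l k : ℕ) (η γ : Fin l → Fin 2) : Prop :=
  ∃ u w : Equiv.Perm (Fin l), shortRep l k u ∧ shortRep l k w ∧ bruhatLT l u w ∧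
    η = (fun i => etaMin l k (u i)) ∧ γ = (fun i => etaMin l k (w i))

/-- The bar involution of `V(a)`: the semilinear extension (with respect to the field
homomorphism `barK`, which implements `q ↦ q⁻¹`) of the map `barV` computing the bar
involution on the standard basis vectors. -/
noncomputable def barSemi (barK : K →+* K) (a : ℕ → ℕ) (l : ℕ) (f : V l) : V l :=
  barV a l (fun η => barK (f η))

/-- `v` is the canonical basis element `v^{◊a}_η` of `V(a)`: it is bar-invariant and
`v - v^a_η` is a `q·ℤ[q]`-linear combination of standard basis vectors strictly smaller
than `v^a_η`. -/
def IsCanon (barK : K →+* K) (a : ℕ → ℕ) (l : ℕ) (η : Fin l → Fin 2) (v : V l) : Prop :=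
  barSemi barK a l v = v ∧
  ∃ R : (Fin l → Fin 2) → Polynomial ℤ,
    (∀ γ, ¬ seqLT l (zeros η) γ η → R γ = 0) ∧
    v = eb η + ∑ γ : Fin l → Fin 2, (q * Polynomial.aeval q (R γ)) • eb γ
/-- The quantum binomial coefficient `[m choose j] = [m]!/([j]![m-j]!)`. -/
noncomputable def qbin (m j : ℕ) : K := qfact m / (qfact j * qfact (m - j))

/-- The sequence `(a, b)`. -/
def pair (a b : ℕ) : ℕ → ℕ := fun j => if j = 0 then a else b

/-- The constant sequence `(c)`. -/
def single (c : ℕ) : ℕ → ℕ := fun _ => c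

/-- The projection `Φ_{a,b} : V(a) ⊗ V(b) → V(a+b)`:
`v^a_1 ⊗ v^b_1 ↦ 0`, `v^a_1 ⊗ v^b_0 ↦ q^{-b}·[a+b-1 choose b]·v^{a+b}_1`,
`v^a_0 ⊗ v^b_1 ↦ [a+b-1 choose a]·v^{a+b}_1`, `v^a_0 ⊗ v^b_0 ↦ [a+b choose a]·v^{a+b}_0`. -/
noncomputable def PhiDown (a b : ℕ) : V 2 → V 1 := fun x γ =>
  if γ 0 = 0 then qbin (a + b) a * x (fun _ => 0)
  else q ^ (-(b : ℤ)) * qbin (a + b - 1) b * x (fun j => if j = 0 then 1 else 0)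
    + qbin (a + b - 1) a * x (fun j => if j = 0 then 0 else 1)

/-- The inclusion `Φ^{a,b} : V(a+b) → V(a) ⊗ V(b)`:
`v^{a+b}_1 ↦ v^a_1 ⊗ v^b_0 + q^a·v^a_0 ⊗ v^b_1`, `v^{a+b}_0 ↦ v^a_0 ⊗ v^b_0`. -/
noncomputable def PhiUp (a b : ℕ) : V 1 → V 2 := fun x γ =>
  if γ = (fun _ => 0) then x (fun _ => 0)
  else if γ = (fun j => if j = 0 then 1 else 0) then x (fun _ => 1)
  else if γ = (fun j => if j = 0 then 0 else 1) then q ^ a * x (fun _ => 1)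
  else 0

/-- `β^η_j = a_j - η_j`. -/
def betaE (a : ℕ → ℕ) {m : ℕ} (η : Fin m → Fin 2) (i : Fin m) : ℕ := a i - (η i : ℕ)

/-- The diagonal coefficient
`q^{Σ_{i≠j} β^η_i β^η_j}·[β^η_1+⋯+β^η_m]!/([β^η_1]!⋯[β^η_m]!)` of the bilinear form
(the sum in the exponent is over the unordered pairs `i ≠ j`). -/
noncomputable def formCoeff (a : ℕ → ℕ) (m : ℕ) (η : Fin m → Fin 2) : K :=
  q ^ (∑ p ∈ (Finset.univ ×ˢ Finset.univ).filter (fun p : Fin m × Fin m => p.1 < p.2),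
        betaE a η p.1 * betaE a η p.2)
    * qfact (∑ i, betaE a η i) / ∏ i, qfact (betaE a η i)

/-- The symmetric bilinear form `(·,·)_a` on `V(a)`, for which the standard basis is
orthogonal with `(v^a_η, v^a_η)_a = formCoeff a m η`. -/
noncomputable def Bform (a : ℕ → ℕ) (m : ℕ) (f g : V m) : K :=
  ∑ η : Fin m → Fin 2, formCoeff a m η * f η * g η

/-!
Both forms are diagonal in the standard bases, and on `V(a+b)` (a single factor) all diagonal
coefficients are `1`. So adjointness reduces to the three basis vectors of `V(a) ⊗ V(b)` on which
`Φ^{a,b}` has a component: there the coefficient `q^{β₁β₂}·[β₁+β₂ choose β₁]` of `(·,·)_{(a,b)}`,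
multiplied by `q^{-ab}` (and by `q^a` at `v_0 ⊗ v_1`), is exactly the matrix entry of `Φ_{a,b}`.
-/

lemma q_ne_zero : q ≠ 0 := RatFunc.X_ne_zero

lemma q_pow_ne_one {n : ℕ} (hn : n ≠ 0) : q ^ n ≠ 1 := by
  intro h
  rw [q, ← RatFunc.algebraMap_X, ← map_pow, ← map_one (algebraMap (Polynomial ℂ) K),
    (IsFractionRing.injective (Polynomial ℂ) K).eq_iff] at h
  simpa [hn] using congrArg Polynomial.natDegree h

lemma q_pow_sub_inv_pow_ne_zero {k : ℕ} (hk : k ≠ 0) : q ^ k - q⁻¹ ^ k ≠ 0 := by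
  intro h
  refine q_pow_ne_one (mul_ne_zero two_ne_zero hk) ?_
  rw [two_mul, pow_add]
  nth_rw 2 [sub_eq_zero.mp h]
  rw [← mul_pow, mul_inv_cancel₀ q_ne_zero, one_pow]

lemma qnum_ne_zero {k : ℕ} (hk : k ≠ 0) : qnum k ≠ 0 :=
  div_ne_zero (q_pow_sub_inv_pow_ne_zero hk) (by simpa using q_pow_sub_inv_pow_ne_zero one_ne_zero)

lemma qfact_ne_zero (k : ℕ) : qfact k ≠ 0 := by
  induction k with
  | zero => exact one_ne_zero
  | succ k ih => exact mul_ne_zero (qnum_ne_zero k.succ_ne_zero) ih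

lemma qbin_sub_left {m j : ℕ} (h : j ≤ m) : qbin m (m - j) = qbin m j := by
  rw [qbin, qbin, Nat.sub_sub_self h, mul_comm]

lemma formCoeff_fin_one (c : ℕ → ℕ) (η : Fin 1 → Fin 2) : formCoeff c 1 η = 1 := by
  have hpairs : (Finset.univ ×ˢ Finset.univ).filter (fun p : Fin 1 × Fin 1 => p.1 < p.2) = ∅ := by
    decide
  rw [formCoeff, hpairs]
  simp [qfact_ne_zero]

lemma formCoeff_fin_two (c : ℕ → ℕ) (η : Fin 2 → Fin 2) :
    formCoeff c 2 η = q ^ (betaE c η 0 * betaE c η 1)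
      * qbin (betaE c η 0 + betaE c η 1) (betaE c η 0) := by
  have hpairs : (Finset.univ ×ˢ Finset.univ).filter (fun p : Fin 2 × Fin 2 => p.1 < p.2)
      = {(0, 1)} := by
    decide
  rw [formCoeff, hpairs, Finset.sum_singleton, Fin.sum_univ_two, Fin.prod_univ_two, qbin,
    Nat.add_sub_cancel_left, mul_div_assoc]

lemma sum_fin_one (f : (Fin 1 → Fin 2) → K) : ∑ η, f η = f (fun _ => 0) + f (fun _ => 1) := by
  rw [← (Equiv.funUnique (Fin 1) (Fin 2)).symm.sum_comp, Fin.sum_univ_two]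
  rfl

lemma sum_fin_two (f : (Fin 2 → Fin 2) → K) :
    ∑ η, f η = f (fun _ => 0) + f (fun j => if j = 0 then 0 else 1)
      + f (fun j => if j = 0 then 1 else 0) + f (fun _ => 1) := by
  rw [← (piFinTwoEquiv fun _ => Fin 2).symm.sum_comp, Fintype.sum_prod_type]
  simp only [Fin.sum_univ_two, ← add_assoc]
  congr 3 <;> congr 1 <;> funext j <;> fin_cases j <;> rfl

lemma formCoeff_pair_zero_zero_mul (a b : ℕ) :
    formCoeff (pair a b) 2 (fun _ => 0) * q ^ (-((a * b : ℕ) : ℤ)) = qbin (a + b) a := by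
  rw [formCoeff_fin_two, mul_right_comm, ← zpow_natCast, ← zpow_add₀ q_ne_zero]
  simp [betaE, pair]

lemma formCoeff_pair_zero_one_mul (a : ℕ) {b : ℕ} (hb : 0 < b) :
    formCoeff (pair a b) 2 (fun j => if j = 0 then 0 else 1) * (q ^ (-((a * b : ℕ) : ℤ)) * q ^ a)
      = qbin (a + b - 1) a := by
  obtain ⟨b, rfl⟩ := Nat.exists_eq_add_one.mpr hb
  rw [formCoeff_fin_two, mul_right_comm, ← zpow_natCast, ← zpow_natCast (n := a),
    ← zpow_add₀ q_ne_zero, ← zpow_add₀ q_ne_zero]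
  simp only [betaE, pair, Fin.isValue, Fin.coe_ofNat_eq_mod, Nat.zero_mod, ↓reduceIte, Nat.mod_succ,
    one_ne_zero, tsub_zero, add_tsub_cancel_right, Nat.cast_mul, Nat.cast_add, Nat.cast_one,
    Nat.add_succ_sub_one]
  rw [show (a : ℤ) * b + (-(a * (b + 1)) + a) = 0 by ring, zpow_zero, one_mul]

lemma formCoeff_pair_one_zero_mul {a : ℕ} (b : ℕ) (ha : 0 < a) :
    formCoeff (pair a b) 2 (fun j => if j = 0 then 1 else 0) * q ^ (-((a * b : ℕ) : ℤ))
      = q ^ (-(b : ℤ)) * qbin (a + b - 1) b := by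
  obtain ⟨a, rfl⟩ := Nat.exists_eq_add_one.mpr ha
  rw [formCoeff_fin_two, mul_right_comm, ← zpow_natCast, ← zpow_add₀ q_ne_zero]
  simp only [betaE, pair, Fin.isValue, Fin.coe_ofNat_eq_mod, Nat.zero_mod, ↓reduceIte, Nat.mod_succ,
    add_tsub_cancel_right, one_ne_zero, tsub_zero, Nat.cast_mul, Nat.cast_add, Nat.cast_one, zpow_neg,
    zpow_natCast, Nat.succ_add_sub_one]
  rw [show (a : ℤ) * b + -((a + 1) * b) = -b by ring, zpow_neg, zpow_natCast,
    ← qbin_sub_left (Nat.le_add_left b a), Nat.add_sub_cancel]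

theorem statement14 (a b : ℕ) (ha : 0 < a) (hb : 0 < b) (v : V 2) (v' : V 1) :
    Bform (single (a + b)) 1 (PhiDown a b v) v'
      = Bform (pair a b) 2 v (q ^ (-((a * b : ℕ) : ℤ)) • PhiUp a b v') := by
  simp only [Bform, sum_fin_one, sum_fin_two, formCoeff_fin_one, PhiDown, PhiUp, Pi.smul_apply,
    smul_eq_mul, funext_iff, Fin.forall_fin_two, Fin.isValue, if_true, if_false, one_ne_zero,
    zero_ne_one, and_false, and_true, and_self, one_mul, mul_zero, add_zero]
  rw [← formCoeff_pair_zero_zero_mul, ← formCoeff_pair_zero_one_mul a hb,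
    ← formCoeff_pair_one_zero_mul b ha]
  ring
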